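/- Let v₁ be a black vertex in a linear black-and-white graph whose current non-trivial component is a path x_k — … — x_1 — v₁ — y_1 — … — y_l (v₁ adjacent to x_1 and y_1). In the graph of the pressing game, no x_i is ever adjacent to any y_j before v₁ is pressed, provided only vertices among {x_i} ∪ {y_j} adjacent to v₁ at their pressing time are pressed; consequently, any valid pressing path consisting of presses of vertices each adjacent to v₁ at its time of pressing, followed by v₁, can be reordered so that all y-vertices are pressed before all x-vertices, the reordering achievable by transpositions of consecutive non-adjacent pressed vertices, each transposition preserving validity and the final graph. -/

import Mathlib

structure BW (V : Type) where
  adj : V → V → Bool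
  black : V → Bool
  symm : ∀ u w, adj u w = adj w u
  irrefl : ∀ v, adj v v = false

variable {V : Type} [DecidableEq V]

/-- Pressing a vertex `v`: neighbors toggle color, pairs of neighbors toggle
adjacency, and `v` becomes white and isolated. -/
def press (G : BW V) (v : V) : BW V where
  adj u w :=
    if u = v ∨ w = v ∨ u = w then false
    else xor (G.adj u w) (G.adj u v && G.adj w v)
  black u := if u = v then false else xor (G.black u) (G.adj u v)
  symm := by
    intro u w
    by_cases h1 : u = v <;> by_cases h2 : w = v <;> by_cases h3 : u = w <;>
      simp_all [G.symm u w, Bool.xor_comm, Bool.and_comm] <;> tauto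
  irrefl := by intro u; simp

/-- The graph obtained after pressing the vertices of a list in order. -/
def pressPath (G : BW V) : List V → BW V
  | [] => G
  | v :: P => pressPath (press G v) P

/-- A pressing path is valid if every vertex is black when it is pressed. -/
def ValidPath (G : BW V) : List V → Prop
  | [] => True
  | v :: P => G.black v = true ∧ ValidPath (press G v) P

/-- The all-white, edgeless graph. -/
def AllWhiteEmpty (G : BW V) : Prop :=
  (∀ v, G.black v = false) ∧ ∀ u w, G.adj u w = false

/-- A successful pressing path: valid and leading to the all-white empty graph. -/
def Successful (G : BW V) (P : List V) : Prop :=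
  ValidPath G P ∧ AllWhiteEmpty (pressPath G P)

/-- The underlying simple graph of a black-and-white graph. -/
def BW.toSimple (G : BW V) : SimpleGraph V where
  Adj u w := G.adj u w = true
  symm := ⟨fun u w h => (G.symm w u).trans h⟩
  loopless := ⟨fun v h => by simp [G.irrefl] at h⟩

/-- `l` enumerates the vertices as a path: `G` is linear with vertex order `l`. -/
def IsPathList (G : BW V) (l : List V) : Prop :=
  l.Nodup ∧ (∀ v, v ∈ l) ∧
    ∀ u w, G.adj u w = true ↔ ∃ i,
      (l[i]? = some u ∧ l[i+1]? = some w) ∨ (l[i]? = some w ∧ l[i+1]? = some u)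

/-- A linear (path) black-and-white graph. -/
def IsLinear (G : BW V) : Prop := ∃ l, IsPathList G l

/-- Adjacency step in the metagraph of successful pressing paths:
their longest common subsequence misses at most 2 presses. -/
def Step (G : BW V) (P Q : List V) : Prop :=
  Successful G P ∧ Successful G Q ∧
    ∃ R : List V, R.Sublist P ∧ R.Sublist Q ∧ P.length ≤ R.length + 2

/-- Transposition of two consecutive presses which are non-adjacent at that moment. -/
def SwapStep (G : BW V) (P Q : List V) : Prop :=
  ∃ A u w B, P = A ++ u :: w :: B ∧ Q = A ++ w :: u :: B ∧
    (pressPath G A).adj u w = false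

/-- The induced black-and-white graph on a subset of the vertices. -/
def BW.restrict (G : BW V) (p : V → Prop) [DecidablePred p] : BW {u // p u} where
  adj u w := G.adj u.1 w.1
  black u := G.black u.1
  symm := fun u w => G.symm u.1 w.1
  irrefl := fun u => G.irrefl u.1

/-- The all-black path graph on `n` vertices. -/
def pathAllBlack (n : ℕ) : BW (Fin n) where
  adj i j := decide (i.1 + 1 = j.1 ∨ j.1 + 1 = i.1)
  black _ := true
  symm := by intro u w; simp [or_comm]
  irrefl := by intro v; simp

/-!
Pressing `z` toggles only edges between two neighbours of `z`, so every edge it creates is the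
shortcut of a path `u — z — w`. Hence, as long as `v₁` is not pressed, the property "every edge
from the left of `v₁` to its right passes through `v₁`", which holds in the initial path, is
preserved; in particular left and right vertices are never adjacent. Pressing two non-adjacent
vertices in either order gives the same graph and the same colours, so a bubble sort by adjacent
transpositions moves all right-side presses in front of the left-side ones.
-/

omit [DecidableEq V] in
theorem BW.ext {G H : BW V} (hadj : G.adj = H.adj) (hblack : G.black = H.black) : G = H := by
  cases G; cases H; congr

/-- As `u` and `w` are non-adjacent, neither press changes the other's neighbourhood, so the two
sets of toggles are independent. -/
theorem press_comm {G : BW V} {u w : V} (h : G.adj u w = false) :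
    press (press G u) w = press (press G w) u := by
  apply BW.ext <;> funext a <;> simp only [press]
  · funext b
    split_ifs <;> grind [BW.irrefl, BW.symm]
  · split_ifs <;> grind [BW.irrefl, BW.symm]

theorem press_black_of_adj_eq_false {G : BW V} {u w : V} (h : G.adj w u = false)
    (hne : w ≠ u) : (press G u).black w = G.black w := by
  simp [press, hne, h]

theorem pressPath_append (G : BW V) (A B : List V) :
    pressPath G (A ++ B) = pressPath (pressPath G A) B := by
  induction A generalizing G with
  | nil => rfl
  | cons a A ih => exact ih (press G a)

theorem validPath_append (G : BW V) (A B : List V) :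
    ValidPath G (A ++ B) ↔ ValidPath G A ∧ ValidPath (pressPath G A) B := by
  induction A generalizing G with
  | nil => simp [ValidPath, pressPath]
  | cons a A ih => simp [ValidPath, pressPath, ih, and_assoc]

namespace SwapStep

variable {G : BW V} {X Y : List V}

theorem pressPath_eq (h : SwapStep G X Y) : pressPath G X = pressPath G Y := by
  obtain ⟨A, u, w, B, rfl, rfl, hadj⟩ := h
  simp only [pressPath_append, pressPath, press_comm hadj]

theorem validPath (h : SwapStep G X Y) (hX : ValidPath G X) : ValidPath G Y := by
  obtain ⟨A, u, w, B, rfl, rfl, hadj⟩ := h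
  by_cases huw : u = w
  · exact huw ▸ hX
  rw [validPath_append] at hX ⊢
  obtain ⟨hA, hu, hw, hB⟩ := hX
  have hadj' : (pressPath G A).adj w u = false := ((pressPath G A).symm w u).trans hadj
  exact ⟨hA, press_black_of_adj_eq_false hadj' (Ne.symm huw) ▸ hw,
    (press_black_of_adj_eq_false hadj huw).symm ▸ hu, press_comm hadj ▸ hB⟩

theorem append_right (h : SwapStep G X Y) (C : List V) : SwapStep G (X ++ C) (Y ++ C) := by
  obtain ⟨A, u, w, B, rfl, rfl, hadj⟩ := h
  exact ⟨A, u, w, B ++ C, by simp, by simp, hadj⟩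

theorem reflTransGen_pressPath_eq (h : Relation.ReflTransGen (SwapStep G) X Y) :
    pressPath G X = pressPath G Y := by
  induction h with
  | refl => rfl
  | tail _ hstep ih => exact ih.trans hstep.pressPath_eq

theorem reflTransGen_validPath (h : Relation.ReflTransGen (SwapStep G) X Y)
    (hX : ValidPath G X) : ValidPath G Y := by
  induction h with
  | refl => exact hX
  | tail _ hstep ih => exact hstep.validPath ih

end SwapStep

theorem press_adj_self (G : BW V) (v x : V) : (press G v).adj v x = false := by
  simp [press]

theorem pressPath_adj_eq_false_of_isolated {G : BW V} {u : V} (h : ∀ x, G.adj u x = false)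
    (A : List V) (x : V) : (pressPath G A).adj u x = false := by
  induction A generalizing G with
  | nil => exact h x
  | cons a A ih => exact ih fun y => by simp [press, h]

theorem pressPath_adj_eq_false_of_mem {G : BW V} {A : List V} {u : V} (hu : u ∈ A) (x : V) :
    (pressPath G A).adj u x = false := by
  obtain ⟨A, B, rfl⟩ := List.append_of_mem hu
  rw [pressPath_append]
  exact pressPath_adj_eq_false_of_isolated (press_adj_self _ u) B x

def BW.Separates (H : BW V) (v : V) (s : V → Prop) : Prop :=
  ∀ u w, H.adj u w = true → u ≠ v → w ≠ v → (s u ↔ s w)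

namespace BW.Separates

variable {H : BW V} {v : V} {s : V → Prop}

omit [DecidableEq V] in
theorem adj_eq_false (h : H.Separates v s) {u w : V} (hu : u ≠ v) (hw : w ≠ v) (hsu : s u)
    (hsw : ¬ s w) : H.adj u w = false := by
  by_contra hadj
  exact hsw ((h u w (Bool.not_eq_false _ ▸ hadj) hu hw).1 hsu)

/-- A new edge `u — w` created by pressing `z` comes from edges `u — z — w`, and `z ≠ v`. -/
theorem press (h : H.Separates v s) {z : V} (hz : z ≠ v) : (press H z).Separates v s := by
  intro u w huw hu hw
  simp only [_root_.press] at huw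
  split_ifs at huw
  cases hx : H.adj u w
  · have hz' : H.adj u z = true ∧ H.adj w z = true := by simp_all
    exact (h u z hz'.1 hu hz).trans (h w z hz'.2 hw hz).symm
  · exact h u w hx hu hw

theorem pressPath (h : H.Separates v s) {A : List V} (hA : v ∉ A) :
    (pressPath H A).Separates v s := by
  induction A generalizing H with
  | nil => exact h
  | cons a A ih =>
    exact ih (h.press (List.ne_of_not_mem_cons hA).symm) (List.not_mem_of_not_mem_cons hA)

end BW.Separates

namespace IsPathList

variable {G : BW V} {l : List V}

theorem idxOf_ne (hl : IsPathList G l) {u v : V} (h : u ≠ v) : l.idxOf u ≠ l.idxOf v :=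
  fun e => h ((List.idxOf_inj (hl.2.1 u)).1 e)

theorem idxOf_of_adj (hl : IsPathList G l) {u w : V} (h : G.adj u w = true) :
    l.idxOf u + 1 = l.idxOf w ∨ l.idxOf w + 1 = l.idxOf u := by
  have hidx : ∀ {i x}, l[i]? = some x → l.idxOf x = i := fun {i _} hx => by
    obtain ⟨hi, rfl⟩ := List.getElem?_eq_some_iff.1 hx
    exact hl.1.idxOf_getElem i hi
  obtain ⟨i, ⟨hu, hw⟩ | ⟨hw, hu⟩⟩ := (hl.2.2 u w).1 h
  · exact Or.inl (by rw [hidx hu, hidx hw])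
  · exact Or.inr (by rw [hidx hu, hidx hw])

theorem separates (hl : IsPathList G l) (v : V) :
    G.Separates v (fun u => l.idxOf u < l.idxOf v) := by
  intro u w h hu hw
  have := hl.idxOf_of_adj h
  have := hl.idxOf_ne hu
  have := hl.idxOf_ne hw
  simp only
  omega

end IsPathList

section StablePartition

open Relation

variable {α : Type*} {r : List α → List α → Prop} {p : α → Bool} {c : α → Prop}

theorem reflTransGen_bubble
    (hr : ∀ A u w B, (∀ x ∈ A, c x) → c u → c w → p u = false → p w = true →
      r (A ++ u :: w :: B) (A ++ w :: u :: B))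
    {a : α} (ha : c a) (hpa : p a = false) (R D : List α) (hR : ∀ x ∈ R, c x ∧ p x = true)
    {C : List α} (hC : ∀ x ∈ C, c x) :
    ReflTransGen r (C ++ a :: (R ++ D)) (C ++ (R ++ a :: D)) := by
  induction R generalizing C with
  | nil => exact .refl
  | cons w R ih =>
    have hw := hR w List.mem_cons_self
    have hrest := ih (fun x hx => hR x (List.mem_cons_of_mem w hx)) (C := C ++ [w])
      (by simpa [or_imp, forall_and] using ⟨hC, hw.1⟩)
    simp only [List.append_assoc, List.cons_append, List.nil_append] at hrest
    exact .head (hr C a w (R ++ D) hC ha hw.1 hpa hw.2) hrest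

theorem reflTransGen_filter_append_filter
    (hr : ∀ A u w B, (∀ x ∈ A, c x) → c u → c w → p u = false → p w = true →
      r (A ++ u :: w :: B) (A ++ w :: u :: B))
    (T : List α) (hT : ∀ x ∈ T, c x) {C : List α} (hC : ∀ x ∈ C, c x) :
    ReflTransGen r (C ++ T) (C ++ (T.filter p ++ T.filter (fun x => !p x))) := by
  induction T generalizing C with
  | nil => exact .refl
  | cons a T ih =>
    have ha := hT a List.mem_cons_self
    have hsorted := ih (fun x hx => hT x (List.mem_cons_of_mem a hx)) (C := C ++ [a])
      (by simpa [or_imp, forall_and] using ⟨hC, ha⟩)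
    simp only [List.append_assoc, List.cons_append, List.nil_append] at hsorted
    cases hpa : p a
    · simpa [hpa] using hsorted.trans (reflTransGen_bubble hr ha hpa _ _
        (fun x hx => ⟨hT x (List.mem_cons_of_mem a (List.mem_of_mem_filter hx)),
          (List.mem_filter.1 hx).2⟩) hC)
    · simpa [hpa] using hsorted

end StablePartition

theorem IsPathList.reflTransGen_swapStep_sides {G : BW V} {l : List V} (hl : IsPathList G l)
    {v : V} {P : List V} (hv : v ∉ P) :
    Relation.ReflTransGen (SwapStep G) P
      (P.filter (fun u => decide (l.idxOf v < l.idxOf u)) ++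
        P.filter (fun u => decide (l.idxOf u < l.idxOf v))) := by
  have hleft : P.filter (fun u => decide (l.idxOf u < l.idxOf v)) =
      P.filter (fun u => !decide (l.idxOf v < l.idxOf u)) :=
    List.filter_congr fun u hu => by
      have := hl.idxOf_ne (ne_of_mem_of_not_mem hu hv)
      rw [← decide_not, decide_eq_decide]
      omega
  rw [hleft]
  refine reflTransGen_filter_append_filter (c := (· ≠ v)) (C := []) ?_ P
    (fun u hu => ne_of_mem_of_not_mem hu hv) (by simp)
  intro A u w B hA hu hw hpu hpw
  have hsep := (hl.separates v).pressPath fun h => hA v h rfl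
  refine ⟨A, u, w, B, rfl, rfl, hsep.adj_eq_false hu hw ?_ ?_⟩
  · have := hl.idxOf_ne hu
    simp only [decide_eq_false_iff_not] at hpu
    omega
  · simp only [decide_eq_true_eq] at hpw
    omega

/-- In a linear graph with vertex order `l`, during a valid pressing path whose
presses are all adjacent to `v₁` at their time of pressing and which ends with
`v₁`: vertices on the left of `v₁` are never adjacent to vertices on the right
of `v₁`; consequently the path can be reordered, by transpositions of
consecutive non-adjacent presses, so that all right-side vertices are pressed
before all left-side vertices, preserving validity and the final graph. -/
theorem stmt15 {V : Type} [DecidableEq V] (G : BW V) (l : List V)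
    (hl : IsPathList G l) (v₁ : V) (P : List V)
    (hvalid : ValidPath G (P ++ [v₁]))
    (hadjtime : ∀ A u B, P = A ++ u :: B → (pressPath G A).adj u v₁ = true) :
    (∀ A B, P ++ [v₁] = A ++ B → ∀ u w, u ∈ P → w ∈ P →
        l.idxOf u < l.idxOf v₁ → l.idxOf v₁ < l.idxOf w →
        (pressPath G A).adj u w = false) ∧
    ∃ Q : List V,
      Q = P.filter (fun u => decide (l.idxOf v₁ < l.idxOf u)) ++
          P.filter (fun u => decide (l.idxOf u < l.idxOf v₁)) ∧
      Relation.ReflTransGen (SwapStep G) (P ++ [v₁]) (Q ++ [v₁]) ∧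
      ValidPath G (Q ++ [v₁]) ∧
      pressPath G (Q ++ [v₁]) = pressPath G (P ++ [v₁]) := by
  have hv₁ : v₁ ∉ P := by
    intro hmem
    obtain ⟨A, B, hP⟩ := List.append_of_mem hmem
    simpa [BW.irrefl] using hadjtime A v₁ B hP
  have hswap := (hl.reflTransGen_swapStep_sides hv₁).lift (· ++ [v₁])
    fun _ _ h => h.append_right [v₁]
  refine ⟨?_, _, rfl, hswap, SwapStep.reflTransGen_validPath hswap hvalid,
    (SwapStep.reflTransGen_pressPath_eq hswap).symm⟩
  intro A B hAB u w hu _ hlu hlw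
  rcases List.append_eq_append_iff.1 hAB with ⟨A', rfl, -⟩ | ⟨C, hP, -⟩
  · exact pressPath_adj_eq_false_of_mem (List.mem_append_left A' hu) w
  · have hsep := (hl.separates v₁).pressPath fun h => hv₁ (hP ▸ List.mem_append_left C h)
    exact hsep.adj_eq_false (by rintro rfl; omega) (by rintro rfl; omega) hlu (by omega)
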